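/- (Positivization of the conjugator.) For every n ≥ 3 and all elements U, V of B_n, there exists X ∈ B_n with U = X·V·X⁻¹ if and only if there exists a positive braid M ∈ B_n with U = M·V·M⁻¹, where a positive braid is an element of the submonoid of B_n generated by σ₁,…,σ_{n−1}. -/

import Mathlib

/-!
Conjugation by the half-twist `Δ` exchanges `σᵢ` and `σ_{n-i}`, so `Δ²` is central. Moreover `Δ`
is a positive braid that is right-divisible by every generator, so each `Δ² σᵢ⁻¹` is positive.
Hence every braid `X` becomes positive after multiplying it on the left by a power of `Δ²`, and
since `Δ²` is central, `Δ^{2k} X` conjugates `V` to the same braid as `X` does.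
-/

namespace Braid

/-- The braid relations on `n` strands: generators `0, …, n-2` stand for `σ₁, …, σ_{n-1}`. -/
def braidRels (n : ℕ) : Set (FreeGroup (Fin (n - 1))) :=
  { r | (∃ i j : Fin (n - 1), (i : ℕ) + 2 ≤ (j : ℕ) ∧
          r = FreeGroup.of i * FreeGroup.of j * (FreeGroup.of i)⁻¹ * (FreeGroup.of j)⁻¹) ∨
        (∃ i j : Fin (n - 1), (j : ℕ) = (i : ℕ) + 1 ∧
          r = FreeGroup.of i * FreeGroup.of j * FreeGroup.of i *
              (FreeGroup.of j * FreeGroup.of i * FreeGroup.of j)⁻¹) }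

/-- The braid group `B_n`, presented by `σ₁, …, σ_{n-1}` and the braid relations. -/
abbrev BraidGroup (n : ℕ) := PresentedGroup (braidRels n)

/-- The standard generator `σ i` of `B_n` (1-indexed); junk value `1` out of range. -/
def s (n : ℕ) (i : ℕ) : BraidGroup n :=
  if h : 1 ≤ i ∧ i ≤ n - 1 then PresentedGroup.of (⟨i - 1, by omega⟩ : Fin (n - 1)) else 1

/-- The Garside half-twist `Δ = (σ₁)(σ₂σ₁)(σ₃σ₂σ₁)⋯(σ_{n-1}σ_{n-2}⋯σ₁)` in `B_n`. -/
def halfTwist (n : ℕ) : BraidGroup n :=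
  ((List.range (n - 1)).map
    (fun r => (((List.range (r + 1)).reverse).map (fun k => s n (k + 1))).prod)).prod

/-- The submonoid of positive braids of `B_n`: the monoid generated by `σ₁, …, σ_{n-1}`. -/
def positive (n : ℕ) : Submonoid (BraidGroup n) :=
  Submonoid.closure (s n '' Set.Icc 1 (n - 1))

/-- The extended generators `ₐσᵢ` of `B_n`:
`₀σᵢ = σᵢ`, `₁σᵢ = Δ·σᵢ⁻¹`, `₂σᵢ = σ_{n-i}`, `₃σᵢ = Δ·σ_{n-i}⁻¹`. -/
def es (n : ℕ) (a : ZMod 4) (i : ℕ) : BraidGroup n :=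
  if a = 0 then s n i
  else if a = 1 then halfTwist n * (s n i)⁻¹
  else if a = 2 then s n (n - i)
  else halfTwist n * (s n (n - i))⁻¹

/-- An extended letter `ₐσᵢ^{e}` is coded as `(a, i, e)`, where `e = true` means
exponent `+1` (a positive letter) and `e = false` means exponent `-1` (a negative letter). -/
abbrev ELetter : Type := ZMod 4 × ℕ × Bool

/-- The element of `B_n` represented by an extended letter. -/
def eletterProd (n : ℕ) (x : ELetter) : BraidGroup n :=
  if x.2.2 then es n x.1 x.2.1 else (es n x.1 x.2.1)⁻¹

/-- The element of `B_n` represented by an extended word. -/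
def eprod (n : ℕ) (W : List ELetter) : BraidGroup n :=
  (W.map (eletterProd n)).prod

/-- The element of `B_n` represented by a positive extended word,
coded as a list of pairs `(a, i)` standing for the letters `ₐσᵢ` (no inverses). -/
def eposProd (n : ℕ) (P : List (ZMod 4 × ℕ)) : BraidGroup n :=
  (P.map (fun x => es n x.1 x.2)).prod

/-- A standard word is a list of pairs `(i, e)` standing for the letters `σᵢ^{±1}`;
this is the element of `B_n` it represents. -/
def sprod (n : ℕ) (V : List (ℕ × Bool)) : BraidGroup n :=
  (V.map (fun x => if x.2 then s n x.1 else (s n x.1)⁻¹)).prod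

/-- The element of `B_n` represented by a positive standard word (a list of indices). -/
def posProd (n : ℕ) (P : List ℕ) : BraidGroup n :=
  (P.map (s n)).prod

/-- The shift `sh(d, ₐσⱼ^{e}) = ₍ₐ₊d₎σⱼ^{f}`, with `f = e` if `d ∈ {0,2}` and
`f = -e` if `d ∈ {1,3}`. -/
def sh (d : ZMod 4) (x : ELetter) : ELetter :=
  (x.1 + d, x.2.1, if d = 0 ∨ d = 2 then x.2.2 else !x.2.2)

/-- One step of the inductive definition of the separation of an extended word. -/
def sepStep (t : List (ZMod 4) × ZMod 4 × List (ZMod 4)) (x : ELetter) :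
    List (ZMod 4) × ZMod 4 × List (ZMod 4) :=
  if x.2.2 = false then (t.1, t.2.1, t.2.2 ++ [-t.2.1])
  else
    match t.2.2 with
    | [] => (t.1 ++ [0], t.2.1, [])
    | a :: L'' => (t.1 ++ [a + t.2.1 + 1], t.2.1 + 2, L'' ++ [3 - t.2.1])

/-- The separation `(L, δ, L')` of an extended word, defined inductively from the left. -/
def separation (W : List ELetter) : List (ZMod 4) × ZMod 4 × List (ZMod 4) :=
  W.foldl sepStep ([], 0, [])

/-- The bishift `SH2(L, δ, L', W)`: the first `|L|` letters of `W` are shifted by the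
entries of `L`, the remaining letters are shifted by `δ +` the entries of `L'`. -/
def SH2 (L : List (ZMod 4)) (δ : ZMod 4) (L' : List (ZMod 4)) (W : List ELetter) :
    List ELetter :=
  List.zipWith sh L (W.take L.length) ++
    List.zipWith sh (L'.map (fun d => δ + d)) (W.drop L.length)

end Braid

section CentralConjugation

variable {G : Type*} [Group G]

theorem exists_pow_mul_mem_closure {S : Set G} (hS : Subgroup.closure S = ⊤) {z : G}
    (hz : z ∈ Subgroup.center G) (hzS : ∀ x ∈ S, z * x⁻¹ ∈ Submonoid.closure S) (g : G) :
    ∃ k : ℕ, z ^ k * g ∈ Submonoid.closure S := by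
  have hg : g ∈ Subgroup.closure S := hS ▸ Subgroup.mem_top g
  induction hg using Subgroup.closure_induction'' with
  | mem x hx => exact ⟨0, by simpa using Submonoid.subset_closure hx⟩
  | inv_mem x hx => exact ⟨1, by simpa using hzS x hx⟩
  | one => exact ⟨0, by simp⟩
  | mul x y _ _ hx hy =>
    obtain ⟨a, ha⟩ := hx
    obtain ⟨b, hb⟩ := hy
    refine ⟨a + b, ?_⟩
    have hzb : z ^ b * x = x * z ^ b := (Subgroup.mem_center_iff.mp (pow_mem hz b) x).symm
    have hsplit : z ^ (a + b) * (x * y) = (z ^ a * x) * (z ^ b * y) := by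
      rw [pow_add, mul_assoc, ← mul_assoc (z ^ b), hzb]
      group
    exact hsplit ▸ mul_mem ha hb

theorem exists_mem_conj_eq_of_forall_pow_mul_mem {P : Submonoid G} {z : G}
    (hz : z ∈ Subgroup.center G) (hP : ∀ g : G, ∃ k : ℕ, z ^ k * g ∈ P) (x v : G) :
    ∃ m ∈ P, m * v * m⁻¹ = x * v * x⁻¹ := by
  obtain ⟨k, hk⟩ := hP x
  refine ⟨z ^ k * x, hk, ?_⟩
  have hzk : x * v * x⁻¹ * z ^ k = z ^ k * (x * v * x⁻¹) :=
    Subgroup.mem_center_iff.mp (pow_mem hz k) _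
  calc z ^ k * x * v * (z ^ k * x)⁻¹ = z ^ k * (x * v * x⁻¹) * (z ^ k)⁻¹ := by group
    _ = x * v * x⁻¹ := by rw [← hzk]; group

end CentralConjugation

namespace Braid

variable {n : ℕ}

theorem of_eq_s (j : Fin (n - 1)) : (PresentedGroup.of j : BraidGroup n) = s n (j + 1) := by
  rw [s, dif_pos (by omega)]
  rfl

theorem s_eq_one_of_out_of_range {i : ℕ} (h : ¬(1 ≤ i ∧ i ≤ n - 1)) : s n i = 1 := dif_neg h

theorem s_mem_positive (i : ℕ) : s n i ∈ positive n := by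
  by_cases h : 1 ≤ i ∧ i ≤ n - 1
  · exact Submonoid.subset_closure ⟨i, h, rfl⟩
  · rw [s_eq_one_of_out_of_range h]
    exact one_mem _

theorem closure_s_eq_top : Subgroup.closure (s n '' Set.Icc 1 (n - 1)) = ⊤ := by
  rw [eq_top_iff, ← PresentedGroup.closure_range_of]
  refine Subgroup.closure_mono ?_
  rintro _ ⟨j, rfl⟩
  exact ⟨j + 1, ⟨by omega, by omega⟩, (of_eq_s j).symm⟩

theorem s_commute {i j : ℕ} (h : i + 2 ≤ j) : Commute (s n i) (s n j) := by
  by_cases hi : 1 ≤ i ∧ i ≤ n - 1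
  · by_cases hj : 1 ≤ j ∧ j ≤ n - 1
    · let a : Fin (n - 1) := ⟨i - 1, by omega⟩
      let b : Fin (n - 1) := ⟨j - 1, by omega⟩
      have hrel : FreeGroup.of a * FreeGroup.of b * (FreeGroup.of a)⁻¹ * (FreeGroup.of b)⁻¹ ∈
          braidRels n := Or.inl ⟨a, b, by simp only [a, b]; omega, rfl⟩
      have hab := PresentedGroup.one_of_mem hrel
      simp only [map_mul, map_inv] at hab
      rw [s, s, dif_pos hi, dif_pos hj]
      exact mul_inv_eq_iff_eq_mul.mp (mul_inv_eq_one.mp hab)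
    · rw [s_eq_one_of_out_of_range hj]
      exact Commute.one_right _
  · rw [s_eq_one_of_out_of_range hi]
    exact Commute.one_left _

theorem s_braid {i : ℕ} (h1 : 1 ≤ i) (h2 : i + 1 ≤ n - 1) :
    s n i * s n (i + 1) * s n i = s n (i + 1) * s n i * s n (i + 1) := by
  let a : Fin (n - 1) := ⟨i - 1, by omega⟩
  let b : Fin (n - 1) := ⟨i, by omega⟩
  have hrel : FreeGroup.of a * FreeGroup.of b * FreeGroup.of a *
      (FreeGroup.of b * FreeGroup.of a * FreeGroup.of b)⁻¹ ∈ braidRels n :=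
    Or.inr ⟨a, b, by simp only [a, b]; omega, rfl⟩
  have hab := PresentedGroup.mk_eq_mk_of_mul_inv_mem hrel
  simp only [map_mul] at hab
  rw [s, s, dif_pos ⟨h1, by omega⟩, dif_pos ⟨by omega, h2⟩]
  exact hab

def desc (n k : ℕ) : BraidGroup n :=
  ((List.range k).reverse.map fun j => s n (j + 1)).prod

def asc (n k : ℕ) : BraidGroup n :=
  ((List.range k).map fun j => s n (j + 1)).prod

/-- The half-twist `Δ_{m+1}` of the first `m + 1` strands, so `Δ = Δ_n`. -/
def partialHalfTwist (n m : ℕ) : BraidGroup n :=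
  ((List.range m).map fun r => desc n (r + 1)).prod

theorem halfTwist_eq_partialHalfTwist : halfTwist n = partialHalfTwist n (n - 1) := rfl

@[simp] theorem desc_zero : desc n 0 = 1 := rfl

@[simp] theorem asc_zero : asc n 0 = 1 := rfl

@[simp] theorem partialHalfTwist_zero : partialHalfTwist n 0 = 1 := rfl

theorem desc_succ (k : ℕ) : desc n (k + 1) = s n (k + 1) * desc n k := by
  simp [desc, List.range_succ]

theorem asc_succ (k : ℕ) : asc n (k + 1) = asc n k * s n (k + 1) := by
  simp [asc, List.range_succ]

theorem partialHalfTwist_succ (m : ℕ) :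
    partialHalfTwist n (m + 1) = partialHalfTwist n m * desc n (m + 1) := by
  simp [partialHalfTwist, List.range_succ]

theorem desc_mem_positive (k : ℕ) : desc n k ∈ positive n := by
  induction k with
  | zero => exact one_mem _
  | succ k ih => exact desc_succ k ▸ mul_mem (s_mem_positive _) ih

theorem partialHalfTwist_mem_positive (m : ℕ) : partialHalfTwist n m ∈ positive n := by
  induction m with
  | zero => exact one_mem _
  | succ m ih => exact partialHalfTwist_succ m ▸ mul_mem ih (desc_mem_positive _)

theorem halfTwist_mem_positive : halfTwist n ∈ positive n :=
  partialHalfTwist_mem_positive _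

theorem s_commute_desc {i k : ℕ} (h : k + 2 ≤ i) : Commute (s n i) (desc n k) := by
  induction k with
  | zero => exact Commute.one_right _
  | succ k ih => exact desc_succ k ▸ (s_commute h).symm.mul_right (ih (by omega))

theorem s_commute_asc {i k : ℕ} (h : k + 2 ≤ i) : Commute (s n i) (asc n k) := by
  induction k with
  | zero => exact Commute.one_right _
  | succ k ih => exact asc_succ k ▸ (ih (by omega)).mul_right (s_commute h).symm

theorem s_commute_partialHalfTwist {i m : ℕ} (h : m + 2 ≤ i) :
    Commute (s n i) (partialHalfTwist n m) := by
  induction m with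
  | zero => exact Commute.one_right _
  | succ m ih =>
    exact partialHalfTwist_succ m ▸ (ih (by omega)).mul_right (s_commute_desc h)

theorem s_mul_desc {j k : ℕ} (hj : 1 ≤ j) (hjk : j < k) (hk : k ≤ n - 1) :
    s n j * desc n k = desc n k * s n (j + 1) := by
  induction k with
  | zero => omega
  | succ k ih =>
    rcases Nat.lt_or_ge j k with hlt | hge
    · calc s n j * desc n (k + 1) = s n (k + 1) * (s n j * desc n k) := by
            rw [desc_succ, ← mul_assoc, (s_commute (by omega : j + 2 ≤ k + 1)).eq, mul_assoc]
        _ = desc n (k + 1) * s n (j + 1) := by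
            rw [ih hlt (by omega), desc_succ, mul_assoc]
    · obtain rfl : j = k := by omega
      obtain ⟨i, rfl⟩ : ∃ i, j = i + 1 := ⟨j - 1, by omega⟩
      calc s n (i + 1) * desc n (i + 1 + 1)
          = s n (i + 1) * s n (i + 1 + 1) * s n (i + 1) * desc n i := by
            rw [desc_succ, desc_succ]; group
        _ = s n (i + 1 + 1) * s n (i + 1) * (s n (i + 1 + 1) * desc n i) := by
            rw [s_braid (by omega) (by omega)]; group
        _ = desc n (i + 1 + 1) * s n (i + 1 + 1) := by
            rw [(s_commute_desc le_rfl).eq, desc_succ, desc_succ]; group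

theorem asc_mul_s {j k : ℕ} (hj : 1 ≤ j) (hjk : j < k) (hk : k ≤ n - 1) :
    asc n k * s n j = s n (j + 1) * asc n k := by
  induction k with
  | zero => omega
  | succ k ih =>
    rcases Nat.lt_or_ge j k with hlt | hge
    · calc asc n (k + 1) * s n j = asc n k * s n j * s n (k + 1) := by
            rw [asc_succ, mul_assoc, ← (s_commute (by omega : j + 2 ≤ k + 1)).eq, mul_assoc]
        _ = s n (j + 1) * asc n (k + 1) := by
            rw [ih hlt (by omega), asc_succ, mul_assoc]
    · obtain rfl : j = k := by omega
      obtain ⟨i, rfl⟩ : ∃ i, j = i + 1 := ⟨j - 1, by omega⟩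
      calc asc n (i + 1 + 1) * s n (i + 1)
          = asc n i * (s n (i + 1) * s n (i + 1 + 1) * s n (i + 1)) := by
            rw [asc_succ, asc_succ]; group
        _ = (s n (i + 1 + 1) * asc n i) * s n (i + 1) * s n (i + 1 + 1) := by
            rw [s_braid (by omega) (by omega), (s_commute_asc le_rfl).eq]; group
        _ = s n (i + 1 + 1) * asc n (i + 1 + 1) := by
            rw [asc_succ, asc_succ]; group

theorem partialHalfTwist_succ_eq_asc_mul (m : ℕ) :
    partialHalfTwist n (m + 1) = asc n (m + 1) * partialHalfTwist n m := by
  induction m with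
  | zero => simp [partialHalfTwist_succ, desc_succ, asc_succ]
  | succ m ih =>
    calc partialHalfTwist n (m + 2)
        = asc n (m + 1) * (partialHalfTwist n m * s n (m + 2)) * desc n (m + 1) := by
          rw [partialHalfTwist_succ, ih, desc_succ]; group
      _ = asc n (m + 2) * partialHalfTwist n (m + 1) := by
          rw [← (s_commute_partialHalfTwist le_rfl).eq, asc_succ (m + 1), partialHalfTwist_succ m]
          group

theorem partialHalfTwist_mul_s {i m : ℕ} (hi : 1 ≤ i) (him : i ≤ m) (hm : m ≤ n - 1) :
    partialHalfTwist n m * s n i = s n (m + 1 - i) * partialHalfTwist n m := by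
  induction m generalizing i with
  | zero => omega
  | succ m ih =>
    obtain rfl | ⟨i, rfl⟩ : i = 1 ∨ ∃ i', i = i' + 1 + 1 := by
      rcases i with _ | _ | i <;> simp_all
    · rcases Nat.eq_zero_or_pos m with rfl | hm0
      · simp [partialHalfTwist_succ, desc_succ]
      · calc partialHalfTwist n (m + 1) * s n 1
            = asc n (m + 1) * (partialHalfTwist n m * s n 1) := by
              rw [partialHalfTwist_succ_eq_asc_mul]; group
          _ = asc n (m + 1) * s n m * partialHalfTwist n m := by
              rw [ih le_rfl hm0 (by omega), Nat.add_sub_cancel]; group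
          _ = s n (m + 1) * partialHalfTwist n (m + 1) := by
              rw [asc_mul_s (by omega) (by omega) hm, partialHalfTwist_succ_eq_asc_mul]; group
    · calc partialHalfTwist n (m + 1) * s n (i + 1 + 1)
          = partialHalfTwist n m * s n (i + 1) * desc n (m + 1) := by
            rw [partialHalfTwist_succ, mul_assoc, ← s_mul_desc (by omega) (by omega) hm, mul_assoc]
        _ = s n (m + 1 + 1 - (i + 1 + 1)) * partialHalfTwist n (m + 1) := by
            rw [ih (by omega) (by omega) (by omega), partialHalfTwist_succ, mul_assoc,
              show m + 1 - (i + 1) = m + 1 + 1 - (i + 1 + 1) by omega]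

theorem halfTwist_mul_s {i : ℕ} (h1 : 1 ≤ i) (h2 : i ≤ n - 1) :
    halfTwist n * s n i = s n (n - i) * halfTwist n := by
  rw [halfTwist_eq_partialHalfTwist, partialHalfTwist_mul_s h1 h2 le_rfl,
    show n - 1 + 1 - i = n - i by omega]

theorem halfTwist_sq_commute_s (i : ℕ) : Commute (halfTwist n ^ 2) (s n i) := by
  by_cases h : 1 ≤ i ∧ i ≤ n - 1
  · calc halfTwist n ^ 2 * s n i = halfTwist n * s n (n - i) * halfTwist n := by
          rw [sq, mul_assoc, halfTwist_mul_s h.1 h.2, mul_assoc]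
      _ = s n i * halfTwist n ^ 2 := by
          rw [halfTwist_mul_s (by omega) (by omega), show n - (n - i) = i by omega, sq, mul_assoc]
  · rw [s_eq_one_of_out_of_range h]
    exact Commute.one_right _

theorem halfTwist_sq_mem_center : halfTwist n ^ 2 ∈ Subgroup.center (BraidGroup n) := by
  rw [Subgroup.mem_center_iff]
  intro g
  have hg : g ∈ Subgroup.centralizer {halfTwist n ^ 2} :=
    PresentedGroup.generated_by _ _ (fun j => by
      rw [Subgroup.mem_centralizer_singleton_iff, of_eq_s]
      exact (halfTwist_sq_commute_s _).eq.symm) g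
  exact Subgroup.mem_centralizer_singleton_iff.mp hg

theorem exists_desc_eq_mul_s_one (k : ℕ) : ∃ P ∈ positive n, desc n (k + 1) = P * s n 1 := by
  induction k with
  | zero => exact ⟨1, one_mem _, by simp [desc_succ]⟩
  | succ k ih =>
    obtain ⟨P, hP, hk⟩ := ih
    exact ⟨s n (k + 2) * P, mul_mem (s_mem_positive _) hP, by rw [desc_succ, hk, mul_assoc]⟩

theorem exists_partialHalfTwist_eq_mul_s {j m : ℕ} (hj : 1 ≤ j) (hjm : j ≤ m) (hm : m ≤ n - 1) :
    ∃ P ∈ positive n, partialHalfTwist n m = P * s n j := by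
  induction m generalizing j with
  | zero => omega
  | succ m ih =>
    obtain rfl | ⟨j, hj1, rfl⟩ : j = 1 ∨ ∃ j', 1 ≤ j' ∧ j = j' + 1 :=
      (eq_or_ne j 1).imp_right fun h => ⟨j - 1, by omega, by omega⟩
    · obtain ⟨P, hP, hd⟩ := exists_desc_eq_mul_s_one (n := n) m
      exact ⟨partialHalfTwist n m * P, mul_mem (partialHalfTwist_mem_positive m) hP,
        by rw [partialHalfTwist_succ, hd, mul_assoc]⟩
    · obtain ⟨P, hP, hPm⟩ := ih hj1 (by omega) (by omega)
      refine ⟨P * desc n (m + 1), mul_mem hP (desc_mem_positive _), ?_⟩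
      rw [partialHalfTwist_succ, hPm, mul_assoc, s_mul_desc hj1 (by omega) hm, mul_assoc]

theorem halfTwist_sq_mul_s_inv_mem_positive {i : ℕ} (h1 : 1 ≤ i) (h2 : i ≤ n - 1) :
    halfTwist n ^ 2 * (s n i)⁻¹ ∈ positive n := by
  obtain ⟨P, hP, hΔ⟩ := exists_partialHalfTwist_eq_mul_s h1 h2 le_rfl
  have hΔP : halfTwist n * (s n i)⁻¹ = P := by
    rw [halfTwist_eq_partialHalfTwist, hΔ, mul_inv_cancel_right]
  rw [sq, mul_assoc, hΔP]
  exact mul_mem halfTwist_mem_positive hP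

theorem positive_conjugator_general (n : ℕ) (U V : BraidGroup n) :
    (∃ X : BraidGroup n, U = X * V * X⁻¹) ↔
      (∃ M ∈ positive n, U = M * V * M⁻¹) := by
  refine ⟨fun ⟨X, hX⟩ => ?_, fun ⟨M, _, hM⟩ => ⟨M, hM⟩⟩
  have hpow : ∀ g : BraidGroup n, ∃ k : ℕ, (halfTwist n ^ 2) ^ k * g ∈ positive n :=
    exists_pow_mul_mem_closure closure_s_eq_top halfTwist_sq_mem_center
      (by rintro _ ⟨i, hi, rfl⟩; exact halfTwist_sq_mul_s_inv_mem_positive hi.1 hi.2)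
  obtain ⟨M, hM, hconj⟩ := exists_mem_conj_eq_of_forall_pow_mul_mem halfTwist_sq_mem_center hpow X V
  exact ⟨M, hM, hX.trans hconj.symm⟩

/-- Positivization of the conjugator: `U` and `V` are conjugate in `B_n` if and only
if they are conjugate by a positive braid. -/
theorem positive_conjugator (n : ℕ) (hn : 3 ≤ n) (U V : BraidGroup n) :
    (∃ X : BraidGroup n, U = X * V * X⁻¹) ↔
      (∃ M ∈ positive n, U = M * V * M⁻¹) :=
  positive_conjugator_general n U V

end Braid
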